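/- arXiv:1904.01358 — 2 statements merged into one kernel-verified Lean document; each statement's English description precedes it below -/
import Mathlib

section
/- For strong compositions α and β, the product of monomial quasisymmetric polynomials in n variables satisfies M_α · M_β = ∑_γ c_{α,β}^γ M_γ, where c_{α,β}^γ is the multiplicity of the strong composition γ in the overlapping shuffle product α ⧢_o β. -/
open MvPolynomial

/-- The monomial `x^b` in `n` variables. -/
noncomputable def xpow (n : ℕ) (b : Fin n → ℕ) : MvPolynomial (Fin n) ℤ :=
  ∏ i, X i ^ b i

/-- The positive part of a weak composition: the strong composition obtained by deleting
all zero entries. -/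
def posPart {n : ℕ} (b : Fin n → ℕ) : List ℕ :=
  (List.ofFn b).filter (fun x => x ≠ 0)

/-- The monomial quasisymmetric polynomial `M_α(x_1, …, x_n)`: the sum of `x^b` over all
weak compositions `b` (supported in positions `1, …, n`) with positive part `α`. -/
noncomputable def Mq (n : ℕ) (α : List ℕ) : MvPolynomial (Fin n) ℤ :=
  ∑ᶠ (b : Fin n → ℕ) (_ : posPart b = α), xpow n b

/-- `t` is an overlapping shuffle of `α` and `β`: a surjection from positions of the
concatenation `αβ` onto `{1, …, k}` that is strictly increasing on the positions of `α`
and on the positions of `β`. -/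
def IsOvShuffle (α β : List ℕ) (k : ℕ)
    (t : Fin (α.length + β.length) → Fin k) : Prop :=
  Function.Surjective t ∧
  ∀ i j : Fin (α.length + β.length), (i : ℕ) < (j : ℕ) →
    ((j : ℕ) < α.length ∨ α.length ≤ (i : ℕ)) → t i < t j

/-- The strong composition `γ` produced by an overlapping shuffle `t`:
`γ_i = ∑_{t(j) = i} (αβ)_j`. -/
def ovShuffleResult (α β : List ℕ) (k : ℕ)
    (t : Fin (α.length + β.length) → Fin k) : List ℕ :=
  List.ofFn (fun i : Fin k =>
    ∑ j ∈ Finset.univ.filter (fun j => t j = i), (α ++ β).getD (j : ℕ) 0)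

/-- The multiplicity of `γ` in the overlapping shuffle product `α ⧢_o β`. -/
noncomputable def ovShuffleMult (α β γ : List ℕ) : ℕ :=
  Nat.card {p : Σ k : ℕ, Fin (α.length + β.length) → Fin k //
    IsOvShuffle α β p.1 p.2 ∧ ovShuffleResult α β p.1 p.2 = γ}

/-!
Write `M_γ = ∑_e x^(e_* γ)`, the sum over strictly increasing `e : [ℓ(γ)] → [n]`, where the
weak composition `e_* γ` (`pushforward γ e`) carries `γ_j` at position `e j`. Then `M_α M_β`
is a sum over pairs `(e₁, e₂)`, i.e. over maps `[ℓ(α) + ℓ(β)] → [n]` increasing on each of the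
two blocks. Factoring such a map through its image as `f ∘ t`, with `t` surjective and `f`
increasing, is a bijection onto pairs of an overlapping shuffle `t` and an increasing `f`, and
`(e₁)_* α + (e₂)_* β = f_* γ` for the composition `γ` produced by `t`. Grouping the shuffles by
`γ` yields the coefficients `c_{α,β}^γ`.
-/

lemma xpow_add {n : ℕ} (b c : Fin n → ℕ) : xpow n (b + c) = xpow n b * xpow n c := by
  simp only [xpow, Pi.add_apply, pow_add, Finset.prod_mul_distrib]

section Pushforward

variable {m n : ℕ}

def pushforward (γ : List ℕ) (e : Fin m → Fin n) : Fin n → ℕ :=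
  fun i => ∑ j ∈ Finset.univ.filter (fun j => e j = i), γ.getD j 0

lemma pushforward_apply_of_injective (γ : List ℕ) {e : Fin m → Fin n}
    (he : Function.Injective e) (j : Fin m) : pushforward γ e (e j) = γ.getD j 0 := by
  rw [pushforward, Finset.sum_eq_single_of_mem j (by simp)]
  intro j' hj' hne
  exact absurd (he (Finset.mem_filter.mp hj').2) hne

lemma pushforward_eq_zero_of_notMem_range (γ : List ℕ) {e : Fin m → Fin n} {i : Fin n}
    (hi : i ∉ Set.range e) : pushforward γ e i = 0 :=
  Finset.sum_eq_zero fun j hj => absurd ⟨j, (Finset.mem_filter.mp hj).2⟩ hi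

lemma pushforward_ne_zero_iff {γ : List ℕ} (hγ : ∀ x ∈ γ, 0 < x) (hm : γ.length = m)
    (e : Fin m → Fin n) (i : Fin n) : pushforward γ e i ≠ 0 ↔ i ∈ Set.range e := by
  have hpos : ∀ j : Fin m, γ.getD j 0 ≠ 0 := fun j => by
    rw [List.getD_eq_getElem _ _ (hm ▸ j.2)]
    exact (hγ _ (List.getElem_mem _)).ne'
  rw [pushforward, Ne, Finset.sum_eq_zero_iff]
  simp only [Finset.mem_filter, Finset.mem_univ, true_and, not_forall, Set.mem_range]
  exact ⟨fun ⟨j, hj, _⟩ => ⟨j, hj⟩, fun ⟨j, hj⟩ => ⟨j, hj, hpos j⟩⟩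

lemma pushforward_comp (γ : List ℕ) {N k : ℕ} (t : Fin N → Fin k) (f : Fin k → Fin n) :
    pushforward (List.ofFn (pushforward γ t)) f = pushforward γ (f ∘ t) := by
  funext i
  have hgetD : ∀ q : Fin k, (List.ofFn (pushforward γ t)).getD q 0 = pushforward γ t q :=
    fun q => by rw [List.getD_eq_getElem _ _ (by simp), List.getElem_ofFn]
  simp only [pushforward, hgetD, Finset.sum_fiberwise_eq_sum_filter, Finset.mem_filter,
    Finset.mem_univ, true_and, Function.comp_apply]

lemma pushforward_append {α β : List ℕ} (e₁ : Fin α.length → Fin n) (e₂ : Fin β.length → Fin n) :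
    pushforward (α ++ β) (Fin.append e₁ e₂) = pushforward α e₁ + pushforward β e₂ := by
  funext i
  simp only [pushforward, Finset.sum_filter, Fin.sum_univ_add, Fin.append_left, Fin.append_right,
    Pi.add_apply, Fin.val_castAdd, Fin.val_natAdd]
  congr 1
  · refine Finset.sum_congr rfl fun j _ => ?_
    rw [List.getD_append _ _ _ _ j.2]
  · refine Finset.sum_congr rfl fun j _ => ?_
    rw [List.getD_append_right _ _ _ _ (Nat.le_add_right _ _), Nat.add_sub_cancel_left]

end Pushforward

section PosPart

variable {m n : ℕ}

lemma posPart_eq_ofFn (b : Fin n → ℕ) (e : Fin m ↪o Fin n)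
    (h : ∀ i, b i ≠ 0 ↔ i ∈ Set.range e) : posPart b = List.ofFn (b ∘ e) := by
  have hsupp : (List.finRange n).filter (fun i => b i ≠ 0) = List.ofFn e := by
    refine List.SortedLT.eq_of_mem_iff ?_ (List.sortedLT_ofFn_iff.mpr e.strictMono) ?_
    · exact ((List.pairwise_lt_finRange n).sublist List.filter_sublist).sortedLT
    · intro i
      simp [h]
  rw [_root_.posPart.eq_1, List.ofFn_eq_map, List.filter_map, ← List.map_ofFn, ← hsupp]
  rfl

lemma posPart_pushforward {γ : List ℕ} (hγ : ∀ x ∈ γ, 0 < x) (hm : γ.length = m)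
    (e : Fin m ↪o Fin n) : posPart (pushforward γ e) = γ := by
  rw [posPart_eq_ofFn _ e (pushforward_ne_zero_iff hγ hm e)]
  subst hm
  conv_rhs => rw [← List.ofFn_getElem (xs := γ)]
  congr 1
  funext j
  rw [Function.comp_apply, pushforward_apply_of_injective γ e.injective,
    List.getD_eq_getElem _ _ j.2]

lemma exists_pushforward_eq {γ : List ℕ} {b : Fin n → ℕ} (hm : γ.length = m)
    (hb : posPart b = γ) : ∃ e : Fin m ↪o Fin n, pushforward γ e = b := by
  classical
  set S := Finset.univ.filter (fun i => b i ≠ 0)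
  have hS : ∀ {k} (h : S.card = k) i, b i ≠ 0 ↔ i ∈ Set.range (S.orderEmbOfFin h) := by
    intro k h i
    simp [Finset.range_orderEmbOfFin, S]
  have hcard : S.card = m := by
    rw [← hm, ← hb, posPart_eq_ofFn b _ (hS rfl), List.length_ofFn]
  refine ⟨S.orderEmbOfFin hcard, funext fun i => ?_⟩
  rw [← hb, posPart_eq_ofFn b _ (hS hcard)]
  by_cases hi : i ∈ Set.range (S.orderEmbOfFin hcard)
  · obtain ⟨j, rfl⟩ := hi
    rw [pushforward_apply_of_injective _ (S.orderEmbOfFin hcard).injective,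
      List.getD_eq_getElem _ _ (by simp), List.getElem_ofFn, Function.comp_apply]
  · rw [pushforward_eq_zero_of_notMem_range _ hi]
    exact (not_not.mp (mt (hS hcard i).mp hi)).symm

lemma pushforward_injective {γ : List ℕ} (hγ : ∀ x ∈ γ, 0 < x) (hm : γ.length = m) :
    Function.Injective fun e : Fin m ↪o Fin n => pushforward γ e := by
  intro e e' h
  refine OrderEmbedding.range_inj.mp (Set.ext fun i => ?_)
  rw [← pushforward_ne_zero_iff hγ hm, ← pushforward_ne_zero_iff hγ hm]
  exact Iff.of_eq (congrArg (· i ≠ 0) h)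

lemma Mq_eq_sum {γ : List ℕ} (hγ : ∀ x ∈ γ, 0 < x) (hm : γ.length = m) :
    Mq n γ = ∑ e : Fin m ↪o Fin n, xpow n (pushforward γ e) := by
  have hset : {b : Fin n → ℕ | posPart b = γ} =
      Set.range fun e : Fin m ↪o Fin n => pushforward γ e := by
    ext b
    exact ⟨fun hb => exists_pushforward_eq hm hb, fun ⟨e, he⟩ => he ▸ posPart_pushforward hγ hm e⟩
  rw [← finsum_eq_sum_of_fintype, ← finsum_mem_range (pushforward_injective hγ hm), ← hset]
  rfl

end PosPart

section Factorization

variable {N n k k' : ℕ}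

lemma exists_surjective_orderEmbedding_comp (e : Fin N → Fin n) :
    ∃ (k : ℕ) (t : Fin N → Fin k) (f : Fin k ↪o Fin n), Function.Surjective t ∧ f ∘ t = e := by
  classical
  set S := Finset.univ.image e
  set f := S.orderEmbOfFin rfl
  have hf : ∀ i, ∃ q, f q = e i := fun i => by
    rw [← Set.mem_range, Finset.range_orderEmbOfFin]
    simp [S]
  choose t ht using hf
  refine ⟨_, t, f, fun q => ?_, funext ht⟩
  obtain ⟨i, hi⟩ : ∃ i, e i = f q := by
    simpa [S] using (Finset.range_orderEmbOfFin S rfl).le (Set.mem_range_self q)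
  exact ⟨i, f.injective ((ht i).trans hi)⟩

lemma card_eq_of_comp_eq_comp {t : Fin N → Fin k} {t' : Fin N → Fin k'}
    {f : Fin k ↪o Fin n} {f' : Fin k' ↪o Fin n} (ht : Function.Surjective t)
    (ht' : Function.Surjective t') (h : f ∘ t = f' ∘ t') : k = k' := by
  have hrange : Set.range f = Set.range f' := by
    rw [← ht.range_comp, ← ht'.range_comp, h]
  calc k = Nat.card (Set.range f) := by rw [Nat.card_range_of_injective f.injective, Nat.card_fin]
    _ = Nat.card (Set.range f') := by rw [hrange]
    _ = k' := by rw [Nat.card_range_of_injective f'.injective, Nat.card_fin]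

lemma eq_of_comp_eq_comp {t t' : Fin N → Fin k} {f f' : Fin k ↪o Fin n}
    (ht : Function.Surjective t) (ht' : Function.Surjective t') (h : f ∘ t = f' ∘ t') :
    f = f' ∧ t = t' := by
  have hf : f = f' := OrderEmbedding.range_inj.mp (by rw [← ht.range_comp, ← ht'.range_comp, h])
  subst hf
  exact ⟨rfl, funext fun i => f.injective (congrFun h i)⟩

end Factorization

section OvShuffle

variable (α β : List ℕ)

abbrev OvShuffle : Type :=
  {p : Σ k : ℕ, Fin (α.length + β.length) → Fin k // IsOvShuffle α β p.1 p.2}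

variable {α β}

lemma isOvShuffle_iff {k : ℕ} {t : Fin (α.length + β.length) → Fin k} :
    IsOvShuffle α β k t ↔ Function.Surjective t ∧ StrictMono (t ∘ Fin.castAdd β.length) ∧
      StrictMono (t ∘ Fin.natAdd α.length) := by
  refine and_congr_right fun _ => ⟨fun h => ⟨fun a b hab => h _ _ hab (Or.inl (by simp)),
    fun a b hab => h _ _ (by simpa using hab) (Or.inr (by simp))⟩, ?_⟩
  rintro ⟨hleft, hright⟩ i j hij hblock
  induction i using Fin.addCases with
  | left a => induction j using Fin.addCases with
    | left b => exact hleft (by simpa using hij)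
    | right b => exact absurd hblock (by simp)
  | right a => induction j using Fin.addCases with
    | left b => simp only [Fin.val_natAdd, Fin.val_castAdd] at hij; omega
    | right b => exact hright (by simpa using hij)

lemma card_le_of_isOvShuffle {k : ℕ} {t : Fin (α.length + β.length) → Fin k}
    (ht : IsOvShuffle α β k t) : k ≤ α.length + β.length := by
  simpa using Fintype.card_le_of_surjective t ht.1

instance : Finite (OvShuffle α β) :=
  Finite.of_injective
    (β := Σ k : Fin (α.length + β.length + 1), Fin (α.length + β.length) → Fin k)
    (fun p => ⟨⟨p.1.1, Nat.lt_succ_of_le (card_le_of_isOvShuffle p.2)⟩, p.1.2⟩) <| by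
      rintro ⟨⟨k, t⟩, _⟩ ⟨⟨k', t'⟩, _⟩ h
      simp only [Sigma.mk.injEq, Fin.mk.injEq] at h
      obtain ⟨rfl, h⟩ := h
      simp_all

noncomputable instance : Fintype (OvShuffle α β) := Fintype.ofFinite _

lemma ovShuffleResult_eq (k : ℕ) (t : Fin (α.length + β.length) → Fin k) :
    ovShuffleResult α β k t = List.ofFn (pushforward (α ++ β) t) := rfl

lemma ovShuffleResult_pos (hα : ∀ x ∈ α, 0 < x) (hβ : ∀ x ∈ β, 0 < x) {k : ℕ}
    {t : Fin (α.length + β.length) → Fin k} (ht : IsOvShuffle α β k t) :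
    ∀ x ∈ ovShuffleResult α β k t, 0 < x := by
  have hαβ : ∀ x ∈ α ++ β, 0 < x := fun x hx => (List.mem_append.mp hx).elim (hα x) (hβ x)
  rintro x hx
  obtain ⟨q, rfl⟩ := List.mem_ofFn.mp hx
  exact Nat.pos_of_ne_zero ((pushforward_ne_zero_iff hαβ List.length_append t q).mpr (ht.1 q))

open Finset in
lemma ovShuffleMult_eq_card (γ : List ℕ) :
    ovShuffleMult α β γ =
      #{p : OvShuffle α β | ovShuffleResult α β p.1.1 p.1.2 = γ} := by
  classical
  rw [ovShuffleMult, ← Nat.card_congr (Equiv.subtypeSubtypeEquivSubtypeInter _ _),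
    Nat.card_eq_fintype_card, Fintype.card_subtype]

lemma finsum_ovShuffleMult_smul {M : Type*} [AddCommGroup M] (hα : ∀ x ∈ α, 0 < x)
    (hβ : ∀ x ∈ β, 0 < x) (g : List ℕ → M) :
    ∑ᶠ (γ : List ℕ) (_ : ∀ x ∈ γ, 0 < x), (ovShuffleMult α β γ : ℤ) • g γ =
      ∑ p : OvShuffle α β, g (ovShuffleResult α β p.1.1 p.1.2) := by
  classical
  simp only [Finset.sum_comp, ovShuffleMult_eq_card, natCast_zsmul]
  refine finsum_cond_eq_sum_of_cond_iff _ fun {γ} hγ => ?_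
  obtain ⟨p, rfl⟩ : ∃ p : OvShuffle α β, ovShuffleResult α β p.1.1 p.1.2 = γ := by
    by_contra! h
    simp [Finset.filter_false_of_mem fun p _ => h p] at hγ
  simpa using ovShuffleResult_pos hα hβ p.2

end OvShuffle

section Split

variable {α β : List ℕ} {n : ℕ}

def splitEmbedding (x : Σ p : OvShuffle α β, Fin p.1.1 ↪o Fin n) :
    (Fin α.length ↪o Fin n) × (Fin β.length ↪o Fin n) :=
  have hmono := (isOvShuffle_iff.mp x.1.2).2
  (.ofStrictMono _ (x.2.strictMono.comp hmono.1), .ofStrictMono _ (x.2.strictMono.comp hmono.2))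

lemma append_splitEmbedding (x : Σ p : OvShuffle α β, Fin p.1.1 ↪o Fin n) :
    Fin.append (splitEmbedding x).1 (splitEmbedding x).2 = x.2 ∘ x.1.1.2 :=
  Fin.append_castAdd_natAdd (f := x.2 ∘ x.1.1.2)

lemma splitEmbedding_injective :
    Function.Injective (splitEmbedding (α := α) (β := β) (n := n)) := by
  rintro ⟨⟨⟨k, t⟩, ht⟩, f⟩ ⟨⟨⟨k', t'⟩, ht'⟩, f'⟩ h
  have hcomp : f ∘ t = f' ∘ t' := by
    rw [← append_splitEmbedding ⟨⟨⟨k, t⟩, ht⟩, f⟩, ← append_splitEmbedding ⟨⟨⟨k', t'⟩, ht'⟩, f'⟩,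
      h]
  obtain rfl := card_eq_of_comp_eq_comp ht.1 ht'.1 hcomp
  obtain ⟨rfl, rfl⟩ := eq_of_comp_eq_comp ht.1 ht'.1 hcomp
  rfl

lemma splitEmbedding_surjective :
    Function.Surjective (splitEmbedding (α := α) (β := β) (n := n)) := by
  rintro ⟨e₁, e₂⟩
  obtain ⟨k, t, f, ht, hft⟩ := exists_surjective_orderEmbedding_comp (Fin.append e₁ e₂)
  have hleft : f ∘ t ∘ Fin.castAdd β.length = e₁ := by
    rw [← Function.comp_assoc, hft]
    exact funext (Fin.append_left e₁ e₂)
  have hright : f ∘ t ∘ Fin.natAdd α.length = e₂ := by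
    rw [← Function.comp_assoc, hft]
    exact funext (Fin.append_right e₁ e₂)
  have hov : IsOvShuffle α β k t := isOvShuffle_iff.mpr ⟨ht,
    fun a b hab => f.lt_iff_lt.mp (by simpa [← hleft] using e₁.strictMono hab),
    fun a b hab => f.lt_iff_lt.mp (by simpa [← hright] using e₂.strictMono hab)⟩
  refine ⟨⟨⟨⟨k, t⟩, hov⟩, f⟩, Prod.ext ?_ ?_⟩
  · exact DFunLike.coe_injective hleft
  · exact DFunLike.coe_injective hright

end Split

/-- For strong compositions `α`, `β`, the product of monomial quasisymmetric polynomials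
is `M_α · M_β = ∑_γ c_{α,β}^γ M_γ`, where `c_{α,β}^γ` is the multiplicity of `γ` in the
overlapping shuffle product `α ⧢_o β`. -/
theorem monomial_qsym_mult (n : ℕ) (α β : List ℕ)
    (hα : ∀ x ∈ α, 0 < x) (hβ : ∀ x ∈ β, 0 < x) :
    Mq n α * Mq n β =
      ∑ᶠ (γ : List ℕ) (_ : ∀ x ∈ γ, 0 < x), (ovShuffleMult α β γ : ℤ) • Mq n γ := by
  calc Mq n α * Mq n β
      = ∑ e : (Fin α.length ↪o Fin n) × (Fin β.length ↪o Fin n),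
          xpow n (pushforward (α ++ β) (Fin.append e.1 e.2)) := by
        rw [Mq_eq_sum hα rfl, Mq_eq_sum hβ rfl, Fintype.sum_mul_sum, ← Fintype.sum_prod_type']
        simp only [pushforward_append, xpow_add]
    _ = ∑ x : Σ p : OvShuffle α β, Fin p.1.1 ↪o Fin n,
          xpow n (pushforward (α ++ β) (x.2 ∘ x.1.1.2)) :=
        (Fintype.sum_bijective splitEmbedding ⟨splitEmbedding_injective, splitEmbedding_surjective⟩
          _ _ fun x => by rw [append_splitEmbedding]).symm
    _ = ∑ p : OvShuffle α β, Mq n (ovShuffleResult α β p.1.1 p.1.2) := by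
        rw [Fintype.sum_sigma]
        refine Fintype.sum_congr _ _ fun p => ?_
        rw [Mq_eq_sum (ovShuffleResult_pos hα hβ p.2) (List.length_ofFn), ovShuffleResult_eq]
        simp only [pushforward_comp]
    _ = _ := (finsum_ovShuffleMult_smul hα hβ _).symm
end

section
/- For every weak composition a, the fundamental slide polynomial expands positively in monomial slide polynomials: 𝔉_a = ∑ 𝔐_b, where the sum is over all weak compositions b with b ⊵ a and b^+ ⊨ a^+. -/
/-
Encode a weak composition `c` by its partial sums `k ↦ c₁ + ⋯ + c_k`: dominance becomes the
pointwise order, and `c⁺` is determined by the set of values of this function. The pointwise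
minimum of two monotone functions with the same set of values has that set of values again, so
for each positive part `p` the length-`n` compositions `c ≥ a` with `c⁺ = p` are closed under
meets and have a least element `b`. These `b` are exactly the compositions with `b ⊵ a`, and the
monomials of `𝔉_a` with positive part `p` are exactly those of `𝔐_b`.
-/

open MvPolynomial

/-- The monomial `x^b` in `n` variables, for a weak composition recorded as a list. -/
noncomputable def xlist (n : ℕ) (b : List ℕ) : MvPolynomial (Fin n) ℤ :=
  ∏ i : Fin n, X i ^ b.getD (i : ℕ) 0

/-- Dominance order: every partial sum of `b` is at least that of `a`. -/
def DomL (b a : List ℕ) : Prop := ∀ k, (a.take k).sum ≤ (b.take k).sum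

/-- The positive part of a weak composition: delete all zero entries. -/
def posL (b : List ℕ) : List ℕ := b.filter (fun x => x ≠ 0)

/-- `β` refines `α`: `α` is obtained by summing consecutive (nonempty) blocks of `β`. -/
def Refines (β α : List ℕ) : Prop :=
  ∃ L : List (List ℕ), L.flatten = β ∧ L.map List.sum = α ∧ ∀ l ∈ L, l ≠ []

/-- `b ⊵ a`: `b ≥ a` in dominance order, and every weak composition `c` with `c ≥ a`
and `c⁺ = b⁺` satisfies `c ≥ b`. -/
def Triang (b a : List ℕ) : Prop :=
  DomL b a ∧ ∀ c : List ℕ, DomL c a → posL c = posL b → DomL c b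

/-- The fundamental slide polynomial `𝔉_a` of a weak composition `a` of length `n`. -/
noncomputable def FSlide (n : ℕ) (a : List ℕ) : MvPolynomial (Fin n) ℤ :=
  ∑ᶠ (b : List ℕ) (_ : b.length = n ∧ DomL b a ∧ Refines (posL b) (posL a)), xlist n b

/-- The monomial slide polynomial `𝔐_b` of a weak composition `b` of length `n`. -/
noncomputable def MSlide (n : ℕ) (b : List ℕ) : MvPolynomial (Fin n) ℤ :=
  ∑ᶠ (c : List ℕ) (_ : c.length = n ∧ DomL c b ∧ posL c = posL b), xlist n c

def prefixSum (l : List ℕ) (k : ℕ) : ℕ := (l.take k).sum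

@[simp] lemma prefixSum_zero (l : List ℕ) : prefixSum l 0 = 0 := rfl

@[simp] lemma prefixSum_nil (k : ℕ) : prefixSum [] k = 0 := by simp [prefixSum]

@[simp] lemma prefixSum_cons_succ (x : ℕ) (t : List ℕ) (k : ℕ) :
    prefixSum (x :: t) (k + 1) = x + prefixSum t k := by
  simp [prefixSum]

lemma prefixSum_of_length_le {l : List ℕ} {k : ℕ} (h : l.length ≤ k) :
    prefixSum l k = l.sum := by
  rw [prefixSum, List.take_of_length_le h]

lemma prefixSum_succ {l : List ℕ} {k : ℕ} (hk : k < l.length) :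
    prefixSum l (k + 1) = prefixSum l k + l[k] :=
  List.sum_take_succ l k hk

lemma monotone_prefixSum (l : List ℕ) : Monotone (prefixSum l) := fun _ _ h =>
  (List.take_sublist_take_left h).sum_le_sum fun _ _ => Nat.zero_le _

lemma eq_of_prefixSum_eq {d e : List ℕ} (hl : d.length = e.length)
    (h : prefixSum d = prefixSum e) : d = e := by
  refine List.ext_getElem hl fun k hd he => ?_
  have := congrFun h (k + 1)
  rw [prefixSum_succ hd, prefixSum_succ he, h] at this
  omega

lemma exists_prefixSum_eq {f : ℕ → ℕ} (hf : Monotone f) (h0 : f 0 = 0) {n : ℕ}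
    (hsat : ∀ k, n ≤ k → f k = f n) : ∃ d : List ℕ, d.length = n ∧ prefixSum d = f := by
  refine ⟨(List.range n).map fun i => f (i + 1) - f i, by simp, funext fun k => ?_⟩
  have htel (m : ℕ) : ((List.range m).map fun i => f (i + 1) - f i).sum = f m := by
    change ∑ i ∈ Finset.range m, (f (i + 1) - f i) = f m
    rw [Finset.sum_range_tsub hf, h0, Nat.sub_zero]
  rw [prefixSum, ← List.map_take, List.take_range, htel]
  rcases le_total k n with h | h
  · rw [min_eq_left h]
  · rw [min_eq_right h, hsat k h]

lemma range_prefixSum_cons (x : ℕ) (t : List ℕ) :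
    Set.range (prefixSum (x :: t)) = insert 0 ((x + ·) '' Set.range (prefixSum t)) := by
  ext v
  constructor
  · rintro ⟨_ | k, rfl⟩
    exacts [Or.inl rfl, Or.inr ⟨prefixSum t k, ⟨k, rfl⟩, by simp⟩]
  · rintro (rfl | ⟨_, ⟨k, rfl⟩, rfl⟩)
    exacts [⟨0, rfl⟩, ⟨k + 1, by simp⟩]

lemma range_prefixSum_cons_zero (t : List ℕ) :
    Set.range (prefixSum (0 :: t)) = Set.range (prefixSum t) := by
  simp only [range_prefixSum_cons, zero_add, Set.image_id']
  exact Set.insert_eq_of_mem ⟨0, rfl⟩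

lemma posL_cons_zero (t : List ℕ) : posL (0 :: t) = posL t := by simp [posL]

lemma posL_cons_of_ne_zero {x : ℕ} (hx : x ≠ 0) (t : List ℕ) :
    posL (x :: t) = x :: posL t := by
  simp [posL, hx]

lemma zero_notMem_posL (l : List ℕ) : 0 ∉ posL l := by simp [posL]

@[simp] lemma sum_posL (l : List ℕ) : (posL l).sum = l.sum := by
  induction l with
  | nil => rfl
  | cons x t ih =>
    rcases eq_or_ne x 0 with rfl | hx
    · simp [posL_cons_zero, ih]
    · simp [posL_cons_of_ne_zero hx, ih]

lemma range_prefixSum_posL (l : List ℕ) :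
    Set.range (prefixSum (posL l)) = Set.range (prefixSum l) := by
  induction l with
  | nil => rfl
  | cons x t ih =>
    rcases eq_or_ne x 0 with rfl | hx
    · rw [posL_cons_zero, range_prefixSum_cons_zero, ih]
    · rw [posL_cons_of_ne_zero hx, range_prefixSum_cons, range_prefixSum_cons, ih]

lemma mem_range_prefixSum_cons_add {x : ℕ} (hx : x ≠ 0) (t : List ℕ) (v : ℕ) :
    x + v ∈ Set.range (prefixSum (x :: t)) ↔ v ∈ Set.range (prefixSum t) := by
  simp [range_prefixSum_cons, hx]

lemma head_mem_range_prefixSum (x : ℕ) (t : List ℕ) : x ∈ Set.range (prefixSum (x :: t)) :=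
  ⟨1, by simp⟩

lemma eq_zero_or_le_of_mem_range_prefixSum {x v : ℕ} {t : List ℕ}
    (h : v ∈ Set.range (prefixSum (x :: t))) : v = 0 ∨ x ≤ v := by
  rw [range_prefixSum_cons] at h
  rcases h with rfl | ⟨w, -, rfl⟩
  exacts [Or.inl rfl, Or.inr (Nat.le_add_right x w)]

lemma range_prefixSum_nil : Set.range (prefixSum []) = {0} := by
  simp

lemma eq_of_range_prefixSum_eq {p q : List ℕ} (hp : 0 ∉ p) (hq : 0 ∉ q)
    (h : Set.range (prefixSum p) = Set.range (prefixSum q)) : p = q := by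
  induction p generalizing q with
  | nil =>
    cases q with
    | nil => rfl
    | cons y u =>
      have hy := head_mem_range_prefixSum y u
      rw [← h, range_prefixSum_nil] at hy
      exact absurd (hy ▸ List.mem_cons_self) hq
  | cons x t ih =>
    cases q with
    | nil =>
      have hx := head_mem_range_prefixSum x t
      rw [h, range_prefixSum_nil] at hx
      exact absurd (hx ▸ List.mem_cons_self) hp
    | cons y u =>
      rw [List.mem_cons, not_or] at hp hq
      have hx0 : x ≠ 0 := Ne.symm hp.1
      have hyx := (eq_zero_or_le_of_mem_range_prefixSum
        (h ▸ head_mem_range_prefixSum x t)).resolve_left hx0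
      have hxy := (eq_zero_or_le_of_mem_range_prefixSum
        (h ▸ head_mem_range_prefixSum y u)).resolve_left (Ne.symm hq.1)
      obtain rfl := le_antisymm hxy hyx
      have htu : Set.range (prefixSum t) = Set.range (prefixSum u) := by
        ext v
        rw [← mem_range_prefixSum_cons_add hx0 t, h, mem_range_prefixSum_cons_add hx0]
      rw [ih hp.2 hq.2 htu]

lemma posL_eq_posL_iff {d e : List ℕ} :
    posL d = posL e ↔ Set.range (prefixSum d) = Set.range (prefixSum e) := by
  refine ⟨fun h => ?_, fun h => ?_⟩
  · rw [← range_prefixSum_posL d, h, range_prefixSum_posL]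
  · refine eq_of_range_prefixSum_eq (zero_notMem_posL d) (zero_notMem_posL e) ?_
    rwa [range_prefixSum_posL, range_prefixSum_posL]

lemma range_min_eq_of_range_eq {ι α : Type*} [LinearOrder ι] [LinearOrder α] {f g : ι → α}
    (hf : Monotone f) (hg : Monotone g) (h : Set.range f = Set.range g) :
    Set.range (fun i => min (f i) (g i)) = Set.range f := by
  ext v
  constructor
  · rintro ⟨i, rfl⟩
    rcases min_choice (f i) (g i) with hi | hi
    · exact ⟨i, hi.symm⟩
    · exact h ▸ ⟨i, hi.symm⟩
  · rintro ⟨i, rfl⟩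
    obtain ⟨j, hj⟩ : f i ∈ Set.range g := h ▸ ⟨i, rfl⟩
    rcases le_total i j with hij | hji
    · exact ⟨j, min_eq_right (hj ▸ hf hij) |>.trans hj⟩
    · exact ⟨i, min_eq_left (hj ▸ hg hji)⟩

lemma domL_iff_prefixSum_le {b a : List ℕ} : DomL b a ↔ prefixSum a ≤ prefixSum b := Iff.rfl

lemma DomL.trans {a b c : List ℕ} (hcb : DomL c b) (hba : DomL b a) : DomL c a :=
  fun k => (hba k).trans (hcb k)

lemma Refines.sum_eq {β α : List ℕ} (h : Refines β α) : β.sum = α.sum := by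
  obtain ⟨L, rfl, rfl, -⟩ := h
  exact List.sum_flatten

lemma sum_eq_of_refines_posL {b a : List ℕ} (h : Refines (posL b) (posL a)) : b.sum = a.sum := by
  simpa using h.sum_eq

lemma sum_eq_of_posL_eq {b c : List ℕ} (h : posL c = posL b) : c.sum = b.sum := by
  rw [← sum_posL c, h, sum_posL]

lemma exists_meet {n : ℕ} {a b c : List ℕ} (ha : a.length = n) (hb : b.length = n)
    (hsum : b.sum = a.sum) (hba : DomL b a) (hca : DomL c a) (hcb : posL c = posL b) :
    ∃ d, d.length = n ∧ DomL d a ∧ posL d = posL b ∧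
      prefixSum d = fun k => min (prefixSum c k) (prefixSum b k) := by
  have hsat (k : ℕ) (hk : n ≤ k) : min (prefixSum c k) (prefixSum b k) = a.sum := by
    have hak : prefixSum a k = a.sum := prefixSum_of_length_le (ha ▸ hk)
    rw [prefixSum_of_length_le (l := b) (by omega), hsum]
    exact min_eq_right (hak ▸ hca k)
  obtain ⟨d, hd, hdps⟩ :=
    exists_prefixSum_eq ((monotone_prefixSum c).min (monotone_prefixSum b))
    (by simp) fun k hk => (hsat k hk).trans (hsat n le_rfl).symm
  refine ⟨d, hd, ?_, ?_, hdps⟩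
  · rw [domL_iff_prefixSum_le, hdps]
    exact fun k => le_min (hca k) (hba k)
  · have hrange := posL_eq_posL_iff.mp hcb
    rwa [posL_eq_posL_iff, hdps,
      range_min_eq_of_range_eq (monotone_prefixSum c) (monotone_prefixSum b) hrange]

lemma finite_setOf_length_sum (n s : ℕ) : {l : List ℕ | l.length = n ∧ l.sum = s}.Finite := by
  refine ((List.finite_length_eq (Fin (s + 1)) n).image (List.map Fin.val)).subset ?_
  rintro l ⟨hl, hs⟩
  refine ⟨l.map (Fin.ofNat (s + 1)), by simpa using hl, ?_⟩
  conv_rhs => rw [← List.map_id l]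
  rw [List.map_map]
  refine List.map_congr_left fun x hx => ?_
  simp [Nat.mod_eq_of_lt (Nat.lt_succ_of_le (hs ▸ List.le_sum_of_mem hx))]

/-- Take `b` minimal among the length-`n` compositions `≥ a` with positive part `c⁺`; its meet
with any competitor lies in that set again, so minimality forces `b` below the competitor. -/
lemma exists_triang {n : ℕ} {a c : List ℕ} (ha : a.length = n) (hc : c.length = n)
    (hca : DomL c a) (hsum : c.sum = a.sum) :
    ∃ b, b.length = n ∧ Triang b a ∧ posL b = posL c := by
  let S := {d : List ℕ | d.length = n ∧ DomL d a ∧ posL d = posL c}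
  have hS : S.Finite := (finite_setOf_length_sum n a.sum).subset fun d ⟨hd, _, hdc⟩ =>
    ⟨hd, (sum_eq_of_posL_eq hdc).trans hsum⟩
  obtain ⟨b, ⟨hb, hba, hbc⟩, hmin⟩ := hS.exists_minimalFor prefixSum S ⟨c, hc, hca, rfl⟩
  refine ⟨b, hb, ⟨hba, fun c' hc'a hc'b => ?_⟩, hbc⟩
  obtain ⟨d, hd, hda, hdb, hdps⟩ :=
    exists_meet ha hb ((sum_eq_of_posL_eq hbc).trans hsum) hba hc'a hc'b
  have hdb_le : prefixSum d ≤ prefixSum b := hdps ▸ fun k => min_le_right _ _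
  have hbd : prefixSum b ≤ prefixSum d := hmin ⟨hd, hda, hdb.trans hbc⟩ hdb_le
  exact fun k => (hbd k).trans (hdps ▸ min_le_left _ _)

lemma eq_of_triang {n : ℕ} {a b b' : List ℕ} (hb : b.length = n) (hb' : b'.length = n)
    (ht : Triang b a) (ht' : Triang b' a) (hp : posL b = posL b') : b = b' :=
  eq_of_prefixSum_eq (hb.trans hb'.symm)
    (le_antisymm (ht.2 b' ht'.1 hp.symm) (ht'.2 b ht.1 hp))

lemma setOf_fslide_eq_biUnion {n : ℕ} {a : List ℕ} (ha : a.length = n) :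
    {c | c.length = n ∧ DomL c a ∧ Refines (posL c) (posL a)} =
      ⋃ b ∈ {b | b.length = n ∧ Triang b a ∧ Refines (posL b) (posL a)},
        {c | c.length = n ∧ DomL c b ∧ posL c = posL b} := by
  ext c
  simp only [Set.mem_ofPred_eq, Set.mem_iUnion, exists_prop]
  constructor
  · rintro ⟨hc, hca, hcr⟩
    obtain ⟨b, hb, ht, hbc⟩ := exists_triang ha hc hca (sum_eq_of_refines_posL hcr)
    exact ⟨b, ⟨hb, ht, hbc ▸ hcr⟩, hc, ht.2 c hca hbc.symm, hbc.symm⟩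
  · rintro ⟨b, ⟨-, ht, hbr⟩, hc, hcb, hcb'⟩
    exact ⟨hc, hcb.trans ht.1, hcb' ▸ hbr⟩

/-- The fundamental slide polynomial expands positively in monomial slide polynomials:
`𝔉_a = ∑ 𝔐_b`, summed over weak compositions `b` (of length `n`) with `b ⊵ a` and
`b⁺ ⊨ a⁺`. -/
theorem fslide_expands_in_mslide (n : ℕ) (a : List ℕ) (ha : a.length = n) :
    FSlide n a =
      ∑ᶠ (b : List ℕ)
        (_ : b.length = n ∧ Triang b a ∧ Refines (posL b) (posL a)), MSlide n b := by
  have hdisj : {b | b.length = n ∧ Triang b a ∧ Refines (posL b) (posL a)}.PairwiseDisjoint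
      fun b => {c | c.length = n ∧ DomL c b ∧ posL c = posL b} :=
    fun b ⟨hb, ht, _⟩ b' ⟨hb', ht', _⟩ hne =>
      Set.disjoint_left.mpr fun c ⟨_, _, hcb⟩ ⟨_, _, hcb'⟩ =>
        hne (eq_of_triang hb hb' ht ht' (hcb.symm.trans hcb'))
  have hfin : {b | b.length = n ∧ Triang b a ∧ Refines (posL b) (posL a)}.Finite :=
    (finite_setOf_length_sum n a.sum).subset fun b ⟨hb, _, hbr⟩ =>
      ⟨hb, sum_eq_of_refines_posL hbr⟩
  have hfin' (b : List ℕ) : {c | c.length = n ∧ DomL c b ∧ posL c = posL b}.Finite :=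
    (finite_setOf_length_sum n b.sum).subset fun c ⟨hc, _, hcb⟩ =>
      ⟨hc, sum_eq_of_posL_eq hcb⟩
  calc FSlide n a
      = ∑ᶠ c ∈ {c | c.length = n ∧ DomL c a ∧ Refines (posL c) (posL a)}, xlist n c := rfl
    _ = _ := by
      rw [setOf_fslide_eq_biUnion ha, finsum_mem_biUnion hdisj hfin fun b _ => hfin' b]
      rfl
end
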